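/- Let μ be a probability measure on ℝ with finite second moment, characteristic function f(t) = ∫ e^{itx} dμ(x), and Höffding measure λ_μ. Then for all real t, s with t ≠ 0 and s ≠ 0, the Fourier–Stieltjes transform of λ_μ satisfies ∫∫ e^{itx + isy} dλ_μ(x,y) = (f(t) f(s) − f(t+s)) / (ts). -/

import Mathlib

open MeasureTheory ProbabilityTheory Filter Set
open scoped ENNReal NNReal

noncomputable section

/-- The distribution function of `μ`: `F x = μ (-∞, x]`. -/
def distF (μ : MeasureTheory.Measure ℝ) (x : ℝ) : ℝ := (μ (Set.Iic x)).toReal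

/-- The Höffding kernel of `μ`: `H (x, y) = F (min x y) * (1 - F (max x y))`. -/
def hoeffdingKernel (μ : MeasureTheory.Measure ℝ) (x y : ℝ) : ℝ :=
  distF μ (min x y) * (1 - distF μ (max x y))

/-- The Höffding measure of `μ`: the measure on `ℝ × ℝ` with density `H_μ`
with respect to two-dimensional Lebesgue measure. -/
def hoeffdingMeasure (μ : MeasureTheory.Measure ℝ) : MeasureTheory.Measure (ℝ × ℝ) :=
  (MeasureTheory.volume : MeasureTheory.Measure (ℝ × ℝ)).withDensity
    fun p => ENNReal.ofReal (hoeffdingKernel μ p.1 p.2)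

/-- The covariance of `u` and `v` under `μ`. -/
def covFn (μ : MeasureTheory.Measure ℝ) (u v : ℝ → ℝ) : ℝ :=
  (∫ x, u x * v x ∂μ) - (∫ x, u x ∂μ) * (∫ x, v x ∂μ)

/-- The characteristic function `f(t) = ∫ e^{itx} dμ(x)`. -/
def charFn (μ : Measure ℝ) (t : ℝ) : ℂ :=
  ∫ x, Complex.exp (((t * x : ℝ) : ℂ) * Complex.I) ∂μ

/-! With `g_a(x) = 1[a ≤ x] - F(x)`, the kernel is a covariance:
`H(x, y) = ∫ g_a(x) g_a(y) dμ(a)`. Writing `g_a(x) = ∫ (1[a ≤ x] - 1[c ≤ x]) dμ(c)` and noting that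
`x ↦ 1[a ≤ x] - 1[c ≤ x]` integrates `e^{itx}` from `a` to `c`, one finds
`∫ g_a(x) e^{itx} dx = (e^{ita} - f(t)) · i/t`. Since `∫ |g_a| ≤ |a| + E|X|` is square integrable
under the second moment assumption, Fubini turns the transform of `λ_μ` into
`(i/t)(i/s) ∫ (e^{ita} - f(t)) (e^{isa} - f(s)) dμ(a)`, and this covariance of `e^{itX}` and
`e^{isX}` equals `f(t+s) - f(t) f(s)`. -/

open Complex

theorem integral_sub_integral_mul_sub_integral {Ω 𝕜 : Type*} [MeasurableSpace Ω] [RCLike 𝕜]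
    {μ : Measure Ω} [IsProbabilityMeasure μ] {u v : Ω → 𝕜} (hu : Integrable u μ)
    (hv : Integrable v μ) (huv : Integrable (fun a => u a * v a) μ) :
    ∫ a, (u a - ∫ b, u b ∂μ) * (v a - ∫ b, v b ∂μ) ∂μ
      = ∫ a, u a * v a ∂μ - (∫ a, u a ∂μ) * ∫ a, v a ∂μ := by
  set U := ∫ b, u b ∂μ
  set V := ∫ b, v b ∂μ
  have hexpand : ∀ a, (u a - U) * (v a - V) = (u a * v a - u a * V) - (U * v a - U * V) :=
    fun a => by ring
  have h1 : Integrable (fun a => u a * v a - u a * V) μ := huv.sub (hu.mul_const V)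
  have h2 : Integrable (fun a => U * v a - U * V) μ := (hv.const_mul U).sub (integrable_const _)
  simp_rw [hexpand]
  rw [integral_sub h1 h2, integral_sub huv (hu.mul_const V),
    integral_sub (hv.const_mul U) (integrable_const _), integral_mul_const, integral_const_mul,
    integral_const, probReal_univ, one_smul]
  ring

theorem integral_prod_integral_mul_eq_integral_mul_integral {α β γ 𝕜 : Type*}
    [MeasurableSpace α] [MeasurableSpace β] [MeasurableSpace γ] [RCLike 𝕜]
    {μ : Measure α} {ν : Measure β} {ρ : Measure γ} [SFinite μ] [SFinite ν] [SFinite ρ]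
    {g : α → β → 𝕜} {h : α → γ → 𝕜}
    (hgm : StronglyMeasurable (Function.uncurry g)) (hhm : StronglyMeasurable (Function.uncurry h))
    (hg : ∀ a, Integrable (g a) ν) (hh : ∀ a, Integrable (h a) ρ)
    (hbound : Integrable (fun a => (∫ x, ‖g a x‖ ∂ν) * ∫ y, ‖h a y‖ ∂ρ) μ) :
    ∫ p : β × γ, ∫ a, g a p.1 * h a p.2 ∂μ ∂(ν.prod ρ)
      = ∫ a, (∫ x, g a x ∂ν) * (∫ y, h a y ∂ρ) ∂μ := by
  set F : α → β × γ → 𝕜 := fun a p => g a p.1 * h a p.2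
  have hFm : StronglyMeasurable (Function.uncurry F) :=
    (hgm.comp_measurable (measurable_fst.prodMk (measurable_fst.comp measurable_snd))).mul
      (hhm.comp_measurable (measurable_fst.prodMk (measurable_snd.comp measurable_snd)))
  have hF : Integrable (Function.uncurry F) (μ.prod (ν.prod ρ)) := by
    refine (integrable_prod_iff hFm.aestronglyMeasurable).2
      ⟨.of_forall fun a => (hg a).mul_prod (hh a), hbound.congr (.of_forall fun a => ?_)⟩
    simp only [Function.uncurry_apply_pair, F, norm_mul]
    exact (integral_prod_mul (fun x => ‖g a x‖) (fun y => ‖h a y‖)).symm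
  rw [← integral_integral_swap hF]
  exact integral_congr_ae (.of_forall fun a => integral_prod_mul (g a) (h a))

lemma indicator_Iic_sub_indicator_Iic (a c x : ℝ) :
    (Iic x).indicator (1 : ℝ → ℝ) a - (Iic x).indicator 1 c
      = (Ico a c).indicator 1 x - (Ico c a).indicator 1 x := by
  by_cases ha : a ≤ x <;> by_cases hc : c ≤ x <;> simp [ha, hc, not_le.1]

lemma abs_indicator_Iic_sub_indicator_Iic (a c x : ℝ) :
    |(Iic x).indicator (1 : ℝ → ℝ) a - (Iic x).indicator 1 c|
      = (Iic x).indicator 1 (min a c) - (Iic x).indicator 1 (max a c) := by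
  by_cases ha : a ≤ x <;> by_cases hc : c ≤ x <;> simp [ha, hc]

lemma measurable_indicator_Iic_apply :
    Measurable fun p : ℝ × ℝ => (Iic p.2).indicator (1 : ℝ → ℝ) p.1 :=
  measurable_const.indicator (measurableSet_le measurable_fst measurable_snd)

lemma integral_indicator_Iic_sub_smul {E : Type*} [NormedAddCommGroup E] [NormedSpace ℝ E]
    {φ : ℝ → E} {a c : ℝ} (hφ : IntervalIntegrable φ volume a c) :
    ∫ x, ((Iic x).indicator (1 : ℝ → ℝ) a - (Iic x).indicator 1 c) • φ x = ∫ x in a..c, φ x := by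
  have hIco : ∀ {u v}, IntervalIntegrable φ volume u v → IntegrableOn φ (Ico u v) :=
    fun h => ((intervalIntegrable_iff').1 h).mono_set (Ico_subset_Icc_self.trans Icc_subset_uIcc)
  simp only [indicator_Iic_sub_indicator_Iic, sub_smul, ← indicator_smul_apply_left,
    Pi.one_apply, one_smul]
  rw [integral_sub ((hIco hφ).integrable_indicator measurableSet_Ico)
      ((hIco hφ.symm).integrable_indicator measurableSet_Ico),
    integral_indicator measurableSet_Ico, integral_indicator measurableSet_Ico,
    integral_Ico_eq_integral_Ioc, integral_Ico_eq_integral_Ioc, intervalIntegral]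

lemma integral_abs_indicator_Iic_sub_indicator_Iic (a c : ℝ) :
    ∫ x, |(Iic x).indicator (1 : ℝ → ℝ) a - (Iic x).indicator 1 c| = |a - c| := by
  have h := integral_indicator_Iic_sub_smul (φ := fun _ => (1 : ℝ))
    (intervalIntegrable_const (a := min a c) (b := max a c))
  simp only [smul_eq_mul, mul_one, intervalIntegral.integral_const, max_sub_min_eq_abs] at h
  simp_rw [abs_indicator_Iic_sub_indicator_Iic, h, abs_sub_comm]

lemma integral_indicator_Iic_sub_smul_exp {t : ℝ} (ht : t ≠ 0) (a c : ℝ) :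
    ∫ x, ((Iic x).indicator (1 : ℝ → ℝ) a - (Iic x).indicator 1 c) • cexp (↑(t * x) * I)
      = (cexp (↑(t * c) * I) - cexp (↑(t * a) * I)) * (-I / t) := by
  have hexp : ∀ x : ℝ, cexp (↑(t * x) * I) = cexp ((t * I) * x) := fun x => by push_cast; ring_nf
  have htI : (t : ℂ) * I ≠ 0 := mul_ne_zero (ofReal_ne_zero.2 ht) I_ne_zero
  simp_rw [hexp]
  rw [integral_indicator_Iic_sub_smul (Continuous.intervalIntegrable (by fun_prop) _ _),
    integral_exp_mul_complex htI, div_eq_mul_inv, mul_inv, inv_I]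
  ring

lemma integrable_exp_ofReal_mul_I (μ : Measure ℝ) [IsFiniteMeasure μ] (t : ℝ) :
    Integrable (fun x => cexp (↑(t * x) * I)) μ :=
  (integrable_const (1 : ℝ)).mono (by fun_prop)
    (.of_forall fun x => by simpa using (norm_exp_ofReal_mul_I (t * x)).le)

lemma integral_exp_sub_charFn_mul_exp_sub_charFn (μ : Measure ℝ) [IsProbabilityMeasure μ]
    (t s : ℝ) :
    ∫ a, (cexp (↑(t * a) * I) - charFn μ t) * (cexp (↑(s * a) * I) - charFn μ s) ∂μ
      = charFn μ (t + s) - charFn μ t * charFn μ s := by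
  have hmul : ∀ a : ℝ, cexp (↑(t * a) * I) * cexp (↑(s * a) * I) = cexp (↑((t + s) * a) * I) :=
    fun a => by rw [← Complex.exp_add]; push_cast; ring_nf
  simpa only [hmul, charFn] using integral_sub_integral_mul_sub_integral
    (integrable_exp_ofReal_mul_I μ t) (integrable_exp_ofReal_mul_I μ s)
    (by simpa only [hmul] using integrable_exp_ofReal_mul_I μ (t + s))

lemma monotone_distF (μ : Measure ℝ) [IsFiniteMeasure μ] : Monotone (distF μ) :=
  fun _ _ hxy => measureReal_mono (Iic_subset_Iic.2 hxy)

lemma distF_eq_integral_indicator (μ : Measure ℝ) (x : ℝ) :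
    distF μ x = ∫ a, (Iic x).indicator 1 a ∂μ :=
  (integral_indicator_one measurableSet_Iic).symm

def centeredStep (μ : Measure ℝ) (a x : ℝ) : ℝ := (Iic x).indicator 1 a - distF μ x

section CenteredStep

variable {μ : Measure ℝ} [IsProbabilityMeasure μ]

lemma hoeffdingKernel_eq_integral_centeredStep_mul (x y : ℝ) :
    hoeffdingKernel μ x y = ∫ a, centeredStep μ a x * centeredStep μ a y ∂μ := by
  have hint : ∀ z, Integrable ((Iic z).indicator (1 : ℝ → ℝ)) μ := fun z =>
    (integrable_const 1).indicator measurableSet_Iic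
  have hprod : ∀ a, (Iic x).indicator (1 : ℝ → ℝ) a * (Iic y).indicator 1 a
      = (Iic (min x y)).indicator 1 a := fun a => by
    rw [← Pi.mul_apply, ← inter_indicator_one, Iic_inter_Iic]
  simp only [centeredStep]
  rw [distF_eq_integral_indicator μ x, distF_eq_integral_indicator μ y,
    integral_sub_integral_mul_sub_integral (hint x) (hint y) (by simpa only [hprod] using hint _)]
  simp_rw [hprod, ← distF_eq_integral_indicator, hoeffdingKernel]
  rcases le_total x y with h | h
  · simp only [min_eq_left h, max_eq_right h]; ring
  · simp only [min_eq_right h, max_eq_left h]; ring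

lemma measurable_centeredStep : Measurable (Function.uncurry (centeredStep μ)) :=
  measurable_indicator_Iic_apply.sub ((monotone_distF μ).measurable.comp measurable_snd)

lemma centeredStep_eq_integral (a x : ℝ) :
    centeredStep μ a x = ∫ c, ((Iic x).indicator 1 a - (Iic x).indicator 1 c) ∂μ := by
  rw [integral_sub (integrable_const _) ((integrable_const 1).indicator measurableSet_Iic),
    integral_const, probReal_univ, one_smul, ← distF_eq_integral_indicator, centeredStep]

lemma integrable_indicator_Iic_sub_indicator_Iic_prod (hμ : Integrable id μ) (a : ℝ) :
    Integrable (fun p : ℝ × ℝ => (Iic p.2).indicator (1 : ℝ → ℝ) a - (Iic p.2).indicator 1 p.1)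
      (μ.prod volume) := by
  have hmeas : Measurable fun p : ℝ × ℝ =>
      (Iic p.2).indicator (1 : ℝ → ℝ) a - (Iic p.2).indicator 1 p.1 :=
    (measurable_indicator_Iic_apply.comp (measurable_const.prodMk measurable_snd)).sub
      measurable_indicator_Iic_apply
  refine (integrable_prod_iff hmeas.aestronglyMeasurable).2 ⟨.of_forall fun c => ?_, ?_⟩
  · simp only [indicator_Iic_sub_indicator_Iic]
    exact ((integrable_indicator_iff measurableSet_Ico).2 (integrableOn_const (by simp))).sub
      ((integrable_indicator_iff measurableSet_Ico).2 (integrableOn_const (by simp)))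
  · simp only [Real.norm_eq_abs, integral_abs_indicator_Iic_sub_indicator_Iic]
    exact ((integrable_const a).sub hμ).abs

lemma integrable_centeredStep (hμ : Integrable id μ) (a : ℝ) :
    Integrable (centeredStep μ a) volume := by
  simpa only [← centeredStep_eq_integral] using
    (integrable_indicator_Iic_sub_indicator_Iic_prod hμ a).integral_prod_right

lemma integral_abs_centeredStep_le (hμ : Integrable id μ) (a : ℝ) :
    ∫ x, |centeredStep μ a x| ≤ |a| + ∫ c, |c| ∂μ := by
  have hD := integrable_indicator_Iic_sub_indicator_Iic_prod hμ a
  calc ∫ x, |centeredStep μ a x|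
      ≤ ∫ x, ∫ c, |(Iic x).indicator (1 : ℝ → ℝ) a - (Iic x).indicator 1 c| ∂μ := by
        refine integral_mono (integrable_centeredStep hμ a).abs
          hD.norm.integral_prod_right fun x => ?_
        rw [centeredStep_eq_integral]
        exact abs_integral_le_integral_abs
    _ = ∫ c, |a - c| ∂μ := by
        rw [← integral_integral_swap hD.norm]
        simp_rw [integral_abs_indicator_Iic_sub_indicator_Iic]
    _ ≤ ∫ c, (|a| + |c|) ∂μ :=
        integral_mono ((integrable_const a).sub hμ).abs ((integrable_const _).add hμ.abs)
          fun c => abs_sub _ _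
    _ = |a| + ∫ c, |c| ∂μ := by
        rw [integral_add (g := fun c => |c|) (integrable_const _) hμ.abs, integral_const,
          probReal_univ, one_smul]

lemma integrable_sq_integral_abs_centeredStep (h2 : MemLp id 2 μ) :
    Integrable (fun a => (∫ x, |centeredStep μ a x|) ^ 2) μ := by
  set C := ∫ c, |c| ∂μ
  have hμ : Integrable id μ := h2.integrable one_le_two
  have hdom : Integrable (fun a => a ^ 2 + 2 * C * |a| + C ^ 2) μ :=
    (h2.integrable_sq.add (hμ.abs.const_mul _)).add (integrable_const _)
  refine hdom.mono'
    (measurable_centeredStep.norm.stronglyMeasurable.integral_prod_right.aestronglyMeasurable.pow 2)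
    (.of_forall fun a => ?_)
  have hle := integral_abs_centeredStep_le hμ a
  have hnonneg : 0 ≤ ∫ x, |centeredStep μ a x| := integral_nonneg fun x => abs_nonneg _
  rw [Real.norm_eq_abs, abs_pow, abs_of_nonneg hnonneg, ← sq_abs a]
  nlinarith [abs_nonneg a]

lemma integral_centeredStep_smul_exp (hμ : Integrable id μ) {t : ℝ} (ht : t ≠ 0) (a : ℝ) :
    ∫ x, centeredStep μ a x • cexp (↑(t * x) * I)
      = (cexp (↑(t * a) * I) - charFn μ t) * (I / t) := by
  have hD := (integrable_indicator_Iic_sub_indicator_Iic_prod hμ a).smul_of_top_left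
    (f := fun p : ℝ × ℝ => cexp (↑(t * p.2) * I))
    (memLp_top_of_bound (by fun_prop) 1 (.of_forall fun p => (norm_exp_ofReal_mul_I _).le))
  simp_rw [centeredStep_eq_integral, ← integral_smul_const]
  rw [← integral_integral_swap hD]
  simp_rw [integral_indicator_Iic_sub_smul_exp ht]
  rw [integral_mul_const, integral_sub (integrable_exp_ofReal_mul_I μ t) (integrable_const _),
    integral_const, probReal_univ, one_smul, charFn]
  ring

lemma hoeffdingKernel_nonneg (x y : ℝ) : 0 ≤ hoeffdingKernel μ x y :=
  mul_nonneg ENNReal.toReal_nonneg (sub_nonneg.2 measureReal_le_one)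

lemma integral_hoeffdingMeasure {E : Type*} [NormedAddCommGroup E] [NormedSpace ℝ E]
    (f : ℝ × ℝ → E) :
    ∫ p, f p ∂(hoeffdingMeasure μ) = ∫ p, hoeffdingKernel μ p.1 p.2 • f p := by
  have hF := (monotone_distF μ).measurable
  have hm : Measurable fun p : ℝ × ℝ => hoeffdingKernel μ p.1 p.2 :=
    (hF.comp (measurable_fst.min measurable_snd)).mul
      (measurable_const.sub (hF.comp (measurable_fst.max measurable_snd)))
  rw [hoeffdingMeasure, integral_withDensity_eq_integral_toReal_smul hm.ennreal_ofReal
    (.of_forall fun _ => ENNReal.ofReal_lt_top)]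
  simp_rw [ENNReal.toReal_ofReal (hoeffdingKernel_nonneg _ _)]

lemma integral_exp_hoeffdingMeasure (h2 : MemLp id 2 μ) (t s : ℝ) :
    ∫ p : ℝ × ℝ, cexp (↑(t * p.1 + s * p.2) * I) ∂(hoeffdingMeasure μ)
      = ∫ a, (∫ x, centeredStep μ a x • cexp (↑(t * x) * I))
          * (∫ y, centeredStep μ a y • cexp (↑(s * y) * I)) ∂μ := by
  have hμ : Integrable id μ := h2.integrable one_le_two
  have hkernel : ∀ p : ℝ × ℝ, hoeffdingKernel μ p.1 p.2 • cexp (↑(t * p.1 + s * p.2) * I)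
      = ∫ a, (centeredStep μ a p.1 • cexp (↑(t * p.1) * I))
          * (centeredStep μ a p.2 • cexp (↑(s * p.2) * I)) ∂μ := by
    intro p
    rw [hoeffdingKernel_eq_integral_centeredStep_mul, ← integral_smul_const]
    refine integral_congr_ae (.of_forall fun a => ?_)
    simp only [real_smul, ofReal_mul, ofReal_add, add_mul, Complex.exp_add]
    ring
  have hint : ∀ u a, Integrable (fun x => centeredStep μ a x • cexp (↑(u * x) * I)) volume :=
    fun u a => (integrable_centeredStep hμ a).smul_of_top_left
      (memLp_top_of_bound (by fun_prop) 1 (.of_forall fun x => (norm_exp_ofReal_mul_I _).le))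
  have hmeas : ∀ u, StronglyMeasurable
      (Function.uncurry fun a x => centeredStep μ a x • cexp (↑(u * x) * I)) := fun u =>
    (measurable_centeredStep.smul (by fun_prop)).stronglyMeasurable
  have hbound : Integrable (fun a => (∫ x, ‖centeredStep μ a x • cexp (↑(t * x) * I)‖)
      * ∫ y, ‖centeredStep μ a y • cexp (↑(s * y) * I)‖) μ := by
    simpa only [norm_smul, norm_exp_ofReal_mul_I, mul_one, Real.norm_eq_abs, ← sq]
      using integrable_sq_integral_abs_centeredStep h2
  rw [integral_hoeffdingMeasure, Measure.volume_eq_prod]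
  simp_rw [hkernel]
  exact integral_prod_integral_mul_eq_integral_mul_integral (hmeas t) (hmeas s) (hint t) (hint s)
    hbound

end CenteredStep

/-- **Fourier–Stieltjes transform of the Höffding measure.** If `μ` has a finite second
moment and characteristic function `f`, then for all real `t ≠ 0`, `s ≠ 0`,
`∫∫ e^{i(tx + sy)} dλ_μ(x,y) = (f(t) f(s) − f(t+s)) / (ts)`. -/
theorem hoeffdingMeasure_fourier (μ : Measure ℝ) [IsProbabilityMeasure μ]
    (h2 : MemLp id 2 μ) (t s : ℝ) (ht : t ≠ 0) (hs : s ≠ 0) :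
    ∫ p : ℝ × ℝ, Complex.exp (((t * p.1 + s * p.2 : ℝ) : ℂ) * Complex.I)
        ∂(hoeffdingMeasure μ)
      = (charFn μ t * charFn μ s - charFn μ (t + s)) / ((t * s : ℝ) : ℂ) := by
  have hμ : Integrable id μ := h2.integrable one_le_two
  rw [integral_exp_hoeffdingMeasure h2]
  simp_rw [integral_centeredStep_smul_exp hμ ht, integral_centeredStep_smul_exp hμ hs]
  calc ∫ a, (cexp (↑(t * a) * I) - charFn μ t) * (I / t)
        * ((cexp (↑(s * a) * I) - charFn μ s) * (I / s)) ∂μ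
      = (charFn μ (t + s) - charFn μ t * charFn μ s) * (I / t * (I / s)) := by
        rw [← integral_exp_sub_charFn_mul_exp_sub_charFn, ← integral_mul_const]
        exact integral_congr_ae (.of_forall fun a => by ring)
    _ = (charFn μ t * charFn μ s - charFn μ (t + s)) / ((t * s : ℝ) : ℂ) := by
        rw [div_mul_div_comm, I_mul_I, ofReal_mul]
        ring
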